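/- For h ∈ ℝ and ρ > 0, ∫_{−∞}^{h} e^{−h²/2 + x₀²/2 − ρh − ρx₀} Φ(x₀ − ρ) φ(x₀) dx₀ = (φ(h+ρ)/ρ) Φ(h) − (φ(h) e^{−2hρ}/ρ) Φ(h − ρ). -/

import Mathlib

open MeasureTheory Set

/-- Standard normal density. -/
noncomputable def stdGaussPDF (x : ℝ) : ℝ :=
  (Real.sqrt (2 * Real.pi))⁻¹ * Real.exp (-x ^ 2 / 2)

/-- Standard normal c.d.f. `Φ`. -/
noncomputable def stdGaussCDF (t : ℝ) : ℝ := ∫ x in Set.Iic t, stdGaussPDF x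

/-!
Pulling out `φ(h) e^{-ρh}` leaves `∫_{-∞}^h e^{-ρx} Φ(x - ρ) dx`. Since
`e^{-ρx} φ(x - ρ) = e^{-ρ²/2} φ(x)`, the integrand `e^{-ρx} Φ(x - ρ)` is the derivative of
`(e^{-ρ²/2} Φ(x) - e^{-ρx} Φ(x - ρ)) / ρ`, which vanishes at `-∞` because the Chernoff bound
`Φ(t) ≤ e^{a²/2} e^{at} / (a √(2π))`, taken with `a = ρ + 1`, gives `e^{-ρx} Φ(x - ρ) = O(e^x)`.
-/

open Real Filter Topology

lemma stdGaussPDF_nonneg (x : ℝ) : 0 ≤ stdGaussPDF x := by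
  unfold stdGaussPDF; positivity

lemma continuous_stdGaussPDF : Continuous stdGaussPDF := by
  unfold stdGaussPDF; fun_prop

lemma integrable_stdGaussPDF : Integrable stdGaussPDF := by
  convert ProbabilityTheory.integrable_gaussianPDFReal 0 1 using 1
  ext x
  simp [stdGaussPDF, ProbabilityTheory.gaussianPDFReal]

lemma stdGaussPDF_add (x y : ℝ) :
    stdGaussPDF (x + y) = stdGaussPDF x * exp (-(x * y) - y ^ 2 / 2) := by
  rw [stdGaussPDF, stdGaussPDF, mul_assoc, ← exp_add]
  ring_nf

lemma exp_neg_mul_stdGaussPDF_sub (ρ x : ℝ) :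
    exp (-(ρ * x)) * stdGaussPDF (x - ρ) = exp (-ρ ^ 2 / 2) * stdGaussPDF x := by
  rw [sub_eq_add_neg, stdGaussPDF_add, mul_left_comm, ← exp_add]
  ring_nf

lemma stdGaussPDF_le_exp_mul (a x : ℝ) :
    stdGaussPDF x ≤ (√(2 * π))⁻¹ * exp (a ^ 2 / 2) * exp (a * x) := by
  rw [stdGaussPDF, mul_assoc, ← exp_add]
  gcongr
  nlinarith [sq_nonneg (x + a)]

lemma stdGaussCDF_nonneg (t : ℝ) : 0 ≤ stdGaussCDF t :=
  setIntegral_nonneg measurableSet_Iic fun x _ => stdGaussPDF_nonneg x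

lemma stdGaussCDF_le_exp_mul {a : ℝ} (ha : 0 < a) (t : ℝ) :
    stdGaussCDF t ≤ (√(2 * π))⁻¹ * exp (a ^ 2 / 2) / a * exp (a * t) :=
  calc stdGaussCDF t ≤ ∫ x in Iic t, (√(2 * π))⁻¹ * exp (a ^ 2 / 2) * exp (a * x) :=
        setIntegral_mono_on integrable_stdGaussPDF.integrableOn
          ((integrableOn_exp_mul_Iic ha t).const_mul _) measurableSet_Iic
          fun x _ => stdGaussPDF_le_exp_mul a x
    _ = _ := by rw [integral_const_mul, integral_exp_mul_Iic ha]; ring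

lemma hasDerivAt_stdGaussCDF (t : ℝ) : HasDerivAt stdGaussCDF (stdGaussPDF t) t := by
  have hΦ : stdGaussCDF = fun x => stdGaussCDF 0 + ∫ y in (0 : ℝ)..x, stdGaussPDF y := by
    funext x
    rw [← intervalIntegral.integral_Iic_sub_Iic integrable_stdGaussPDF.integrableOn
      integrable_stdGaussPDF.integrableOn, stdGaussCDF, stdGaussCDF]
    ring
  rw [hΦ]
  exact ((continuous_stdGaussPDF.integral_hasStrictDerivAt 0 t).hasDerivAt).const_add _

lemma continuous_stdGaussCDF : Continuous stdGaussCDF :=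
  continuous_iff_continuousAt.mpr fun t => (hasDerivAt_stdGaussCDF t).continuousAt

lemma tendsto_stdGaussCDF_atBot : Tendsto stdGaussCDF atBot (𝓝 0) :=
  tendsto_integral_Iic_zero tendsto_id

section ShiftedCDF

variable {ρ : ℝ}

lemma exp_neg_mul_stdGaussCDF_sub_le (hρ : -1 < ρ) :
    ∃ C, ∀ x, exp (-(ρ * x)) * stdGaussCDF (x - ρ) ≤ C * exp x := by
  have ha : 0 < ρ + 1 := by linarith
  refine ⟨(√(2 * π))⁻¹ * exp ((ρ + 1) ^ 2 / 2) / (ρ + 1) * exp (-((ρ + 1) * ρ)),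
    fun x => ?_⟩
  calc exp (-(ρ * x)) * stdGaussCDF (x - ρ)
      ≤ exp (-(ρ * x)) * ((√(2 * π))⁻¹ * exp ((ρ + 1) ^ 2 / 2) / (ρ + 1)
          * exp ((ρ + 1) * (x - ρ))) := by
        gcongr; exact stdGaussCDF_le_exp_mul ha _
    _ = _ := by
        rw [mul_assoc _ (exp _), ← exp_add, mul_left_comm, ← exp_add]
        ring_nf

lemma tendsto_exp_neg_mul_stdGaussCDF_sub (hρ : -1 < ρ) :
    Tendsto (fun x => exp (-(ρ * x)) * stdGaussCDF (x - ρ)) atBot (𝓝 0) := by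
  obtain ⟨C, hC⟩ := exp_neg_mul_stdGaussCDF_sub_le hρ
  have hbound : Tendsto (fun x => C * exp x) atBot (𝓝 0) := by
    simpa using tendsto_exp_atBot.const_mul C
  exact tendsto_of_tendsto_of_tendsto_of_le_of_le tendsto_const_nhds hbound
    (fun x => mul_nonneg (exp_nonneg _) (stdGaussCDF_nonneg _)) hC

lemma integrableOn_exp_neg_mul_stdGaussCDF_sub (hρ : -1 < ρ) (h : ℝ) :
    IntegrableOn (fun x => exp (-(ρ * x)) * stdGaussCDF (x - ρ)) (Iic h) := by
  obtain ⟨C, hC⟩ := exp_neg_mul_stdGaussCDF_sub_le hρ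
  refine Integrable.mono' ((integrableOn_exp_mul_Iic one_pos h).const_mul C) ?_ ?_
  · exact (by fun_prop : Continuous fun x => exp (-(ρ * x))).mul
      (continuous_stdGaussCDF.comp (continuous_sub_right ρ)) |>.aestronglyMeasurable
  · filter_upwards with x
    rw [Real.norm_of_nonneg (mul_nonneg (exp_nonneg _) (stdGaussCDF_nonneg _)), one_mul]
    exact hC x

lemma hasDerivAt_antideriv_exp_neg_mul_stdGaussCDF_sub (hρ : ρ ≠ 0) (x : ℝ) :
    HasDerivAt
      (fun y => (exp (-ρ ^ 2 / 2) * stdGaussCDF y - exp (-(ρ * y)) * stdGaussCDF (y - ρ)) / ρ)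
      (exp (-(ρ * x)) * stdGaussCDF (x - ρ)) x := by
  have hexp : HasDerivAt (fun y => exp (-(ρ * y))) (-ρ * exp (-(ρ * x))) x := by
    simpa [mul_comm] using ((hasDerivAt_id x).const_mul ρ).neg.exp
  have hshift : HasDerivAt (fun y => stdGaussCDF (y - ρ)) (stdGaussPDF (x - ρ)) x := by
    simpa using (hasDerivAt_stdGaussCDF (x - ρ)).comp_sub_const x ρ
  refine (((hasDerivAt_stdGaussCDF x).const_mul _).sub (hexp.mul hshift)).div_const ρ
    |>.congr_deriv ?_
  rw [div_eq_iff hρ]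
  linear_combination -exp_neg_mul_stdGaussPDF_sub ρ x

lemma integral_Iic_exp_neg_mul_stdGaussCDF_sub (hρ : 0 < ρ) (h : ℝ) :
    ∫ x in Iic h, exp (-(ρ * x)) * stdGaussCDF (x - ρ)
      = (exp (-ρ ^ 2 / 2) * stdGaussCDF h - exp (-(ρ * h)) * stdGaussCDF (h - ρ)) / ρ := by
  have hlim : Tendsto (fun y => (exp (-ρ ^ 2 / 2) * stdGaussCDF y
      - exp (-(ρ * y)) * stdGaussCDF (y - ρ)) / ρ) atBot (𝓝 0) := by
    simpa using ((tendsto_stdGaussCDF_atBot.const_mul _).sub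
      (tendsto_exp_neg_mul_stdGaussCDF_sub (by linarith))).div_const ρ
  simpa using integral_Iic_of_hasDerivAt_of_tendsto'
    (fun x _ => hasDerivAt_antideriv_exp_neg_mul_stdGaussCDF_sub hρ.ne' x)
    (integrableOn_exp_neg_mul_stdGaussCDF_sub (by linarith) h) hlim

end ShiftedCDF

/-- `∫_{−∞}^h e^{−h²/2 + x₀²/2 − ρh − ρx₀} Φ(x₀−ρ) φ(x₀) dx₀
  = (φ(h+ρ)/ρ) Φ(h) − (φ(h) e^{−2hρ}/ρ) Φ(h−ρ)`. -/
theorem exp_cdf_integral (h ρ : ℝ) (hρ : 0 < ρ) :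
    ∫ x₀ in Set.Iic h,
        Real.exp (-h ^ 2 / 2 + x₀ ^ 2 / 2 - ρ * h - ρ * x₀) *
          stdGaussCDF (x₀ - ρ) * stdGaussPDF x₀
      = stdGaussPDF (h + ρ) / ρ * stdGaussCDF h
        - stdGaussPDF h * Real.exp (-2 * h * ρ) / ρ * stdGaussCDF (h - ρ) := by
  have hintegrand : ∀ x, exp (-h ^ 2 / 2 + x ^ 2 / 2 - ρ * h - ρ * x) * stdGaussCDF (x - ρ)
      * stdGaussPDF x
        = stdGaussPDF h * exp (-(ρ * h)) * (exp (-(ρ * x)) * stdGaussCDF (x - ρ)) := by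
    intro x
    have hexp : exp (-h ^ 2 / 2 + x ^ 2 / 2 - ρ * h - ρ * x) * exp (-x ^ 2 / 2)
        = exp (-h ^ 2 / 2) * exp (-(ρ * h)) * exp (-(ρ * x)) := by
      simp only [← exp_add]; ring_nf
    simp only [stdGaussPDF]
    linear_combination ((√(2 * π))⁻¹ * stdGaussCDF (x - ρ)) * hexp
  simp_rw [hintegrand, integral_const_mul, integral_Iic_exp_neg_mul_stdGaussCDF_sub hρ,
    stdGaussPDF_add]
  have hshift : exp (-(ρ * h)) * exp (-ρ ^ 2 / 2) = exp (-(h * ρ) - ρ ^ 2 / 2) := by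
    rw [← exp_add]; ring_nf
  have hdouble : exp (-(ρ * h)) * exp (-(ρ * h)) = exp (-2 * h * ρ) := by
    rw [← exp_add]; ring_nf
  rw [← hshift, ← hdouble]
  ring
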